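/- Let H be a digraph whose connected components are strongly connected (i.e., each connected component of the underlying undirected graph induces a strongly connected subdigraph), and let G be a subdigraph-minimal digraph containing H as a topological minor (that is, G contains H as a topological minor but no proper subdigraph of G does). Then H and G have the same number of strongly connected components. -/

import Mathlib

/-- A digraph: a finite vertex set and a finite multiset of arcs (ordered pairs of
distinct vertices; parallel arcs allowed, no loops). -/
structure Digr where
  verts : Finset ℕ
  arcs : Multiset (ℕ × ℕ)
  mem_fst : ∀ e ∈ arcs, Prod.fst e ∈ verts
  mem_snd : ∀ e ∈ arcs, Prod.snd e ∈ verts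
  no_loops : ∀ e ∈ arcs, Prod.fst e ≠ Prod.snd e

namespace Digr

/-- `H` is a subdigraph of `G`. -/
def IsSubdigraph (H G : Digr) : Prop := H.verts ⊆ G.verts ∧ H.arcs ≤ G.arcs

def Adj (G : Digr) (u v : ℕ) : Prop := (u, v) ∈ G.arcs

/-- Reachability by directed paths. -/
def Reach (G : Digr) : ℕ → ℕ → Prop := Relation.ReflTransGen G.Adj

def StronglyConnected (G : Digr) : Prop :=
  G.verts.Nonempty ∧ ∀ u ∈ G.verts, ∀ v ∈ G.verts, G.Reach u v

/-- Reachability in the underlying undirected graph. -/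
def UReach (G : Digr) : ℕ → ℕ → Prop :=
  Relation.ReflTransGen (fun u v => G.Adj u v ∨ G.Adj v u)

/-- Every connected component of the underlying undirected graph induces a
strongly connected subdigraph. -/
def ComponentsStronglyConnected (G : Digr) : Prop :=
  ∀ u ∈ G.verts, ∀ v ∈ G.verts, G.UReach u v → G.Reach u v

def MutuallyReach (G : Digr) (u v : ℕ) : Prop := G.Reach u v ∧ G.Reach v u

/-- The number of strongly connected components of `G`. -/
noncomputable def numSCC (G : Digr) : ℕ :=
  Set.ncard {C : Set ℕ | ∃ v ∈ G.verts, C = {u | u ∈ G.verts ∧ G.MutuallyReach u v}}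

/-- Isomorphism of digraphs (respecting arc multiplicities). -/
def Iso (G H : Digr) : Prop :=
  ∃ φ : ℕ → ℕ, Set.BijOn φ ↑G.verts ↑H.verts ∧
    ∀ u v : ℕ, u ∈ G.verts → v ∈ G.verts →
      Multiset.count (u, v) G.arcs = Multiset.count (φ u, φ v) H.arcs

/-- Deletion of a set of vertices (with all incident arcs). -/
def deleteVerts (G : Digr) (X : Finset ℕ) : Digr where
  verts := G.verts \ X
  arcs := G.arcs.filter fun e => e.1 ∉ X ∧ e.2 ∉ X
  mem_fst := by
    intro e he
    rw [Multiset.mem_filter] at he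
    exact Finset.mem_sdiff.mpr ⟨G.mem_fst e he.1, he.2.1⟩
  mem_snd := by
    intro e he
    rw [Multiset.mem_filter] at he
    exact Finset.mem_sdiff.mpr ⟨G.mem_snd e he.1, he.2.2⟩
  no_loops := by
    intro e he
    rw [Multiset.mem_filter] at he
    exact G.no_loops e he.1

/-- Deletion of a (multi)set of arcs. -/
def deleteArcs (G : Digr) (Y : Multiset (ℕ × ℕ)) : Digr where
  verts := G.verts
  arcs := G.arcs - Y
  mem_fst := fun e he => G.mem_fst e (Multiset.mem_of_le tsub_le_self he)
  mem_snd := fun e he => G.mem_snd e (Multiset.mem_of_le tsub_le_self he)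
  no_loops := fun e he => G.no_loops e (Multiset.mem_of_le tsub_le_self he)

/-- `H` is obtained from `G` by contracting the strongly connected subdigraph `S`
to the single (new) vertex `vS`. -/
def IsSCContractionOf (H G S : Digr) (vS : ℕ) : Prop :=
  S.IsSubdigraph G ∧ S.StronglyConnected ∧ vS ∉ G.verts \ S.verts ∧
  H.verts = (G.verts \ S.verts) ∪ {vS} ∧
  H.arcs = (G.arcs.filter fun e => ¬(e.1 ∈ S.verts ∧ e.2 ∈ S.verts)).map
    fun e => (if e.1 ∈ S.verts then vS else e.1, if e.2 ∈ S.verts then vS else e.2)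

def SCContractStep (G H : Digr) : Prop := ∃ S vS, IsSCContractionOf H G S vS

/-- `H` is a strong minor of `G`. -/
def StrongMinorOf (H G : Digr) : Prop :=
  ∃ G₀ H₀ : Digr, G₀.IsSubdigraph G ∧ Relation.ReflTransGen SCContractStep G₀ H₀ ∧ H₀.Iso H

/-- The arc `(u, v)` is contractible: it is the only arc with head `v`, or the only
arc with tail `u`. -/
def Contractible (G : Digr) (u v : ℕ) : Prop :=
  (u, v) ∈ G.arcs ∧
  (G.arcs.filter (fun a => a.2 = v) = {(u, v)} ∨
   G.arcs.filter (fun a => a.1 = u) = {(u, v)})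

/-- `H` is obtained from `G` by contracting the contractible arc `(u, v)`
(identifying `u` and `v` into the vertex `u`). -/
def IsButterflyContractionOf (H G : Digr) (u v : ℕ) : Prop :=
  G.Contractible u v ∧
  H.verts = G.verts.erase v ∧
  H.arcs = (G.arcs.filter fun a => ¬((a.1 = u ∧ a.2 = v) ∨ (a.1 = v ∧ a.2 = u))).map
    fun a => (if a.1 = v then u else a.1, if a.2 = v then u else a.2)

def ButterflyStep (G H : Digr) : Prop := ∃ u v, IsButterflyContractionOf H G u v

/-- `H` is a butterfly minor of `G`. -/
def ButterflyMinorOf (H G : Digr) : Prop :=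
  ∃ G₀ H₀ : Digr, G₀.IsSubdigraph G ∧ Relation.ReflTransGen ButterflyStep G₀ H₀ ∧ H₀.Iso H

/-- `H` is obtained from `G` by subdividing one arc (replacing `(u, v)` by a directed
path `u, w, v` through a new vertex `w`). -/
def SubdivStep (G H : Digr) : Prop :=
  ∃ u v w : ℕ, (u, v) ∈ G.arcs ∧ w ∉ G.verts ∧
    H.verts = insert w G.verts ∧
    H.arcs = (u, w) ::ₘ (w, v) ::ₘ G.arcs.erase (u, v)

/-- `H` is a topological minor of `G`: some subdivision of a digraph isomorphic to `H`
is a subdigraph of `G`. -/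
def TopMinorOf (H G : Digr) : Prop :=
  ∃ H₀ H₁ : Digr, H₀.Iso H ∧ Relation.ReflTransGen SubdivStep H₀ H₁ ∧ H₁.IsSubdigraph G

/-- A directed path in `G`, as a nonempty list of distinct vertices with consecutive arcs. -/
def IsDipath (G : Digr) (l : List ℕ) : Prop :=
  l ≠ [] ∧ l.Nodup ∧ (∀ x ∈ l, x ∈ G.verts) ∧ l.Chain' (fun a b => (a, b) ∈ G.arcs)

/-- The multiset of arcs traversed by a list of vertices. -/
def walkArcs (l : List ℕ) : Multiset (ℕ × ℕ) := (l.zip l.tail : List (ℕ × ℕ))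

/-- `G` contains `H` as an immersion: there are an injection of `V(H)` into `V(G)` and,
for each arc of `H`, a directed path of `G` joining the images of its endpoints, these
paths being pairwise arc-disjoint. -/
def ImmersionOf (H G : Digr) : Prop :=
  ∃ φ : ℕ → ℕ, Set.InjOn φ ↑H.verts ∧ (∀ v ∈ H.verts, φ v ∈ G.verts) ∧
    ∃ (L : List (ℕ × ℕ)) (P : List (List ℕ)),
      (L : Multiset (ℕ × ℕ)) = H.arcs ∧ P.length = L.length ∧
      (∀ (i : ℕ) (hP : i < P.length) (hL : i < L.length),
        G.IsDipath (P.get ⟨i, hP⟩) ∧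
        (P.get ⟨i, hP⟩).head? = some (φ (L.get ⟨i, hL⟩).1) ∧
        (P.get ⟨i, hP⟩).getLast? = some (φ (L.get ⟨i, hL⟩).2)) ∧
      (P.map walkArcs).sum ≤ G.arcs

/-- A semicomplete digraph: at least one arc between every pair of distinct vertices. -/
def Semicomplete (G : Digr) : Prop :=
  ∀ u ∈ G.verts, ∀ v ∈ G.verts, u ≠ v → (u, v) ∈ G.arcs ∨ (v, u) ∈ G.arcs

/-- An `s`-semicomplete digraph: every vertex is adjacent to all but at most `s` of the
other vertices. -/
def SSemicomplete (s : ℕ) (G : Digr) : Prop :=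
  ∀ v ∈ G.verts,
    (G.verts.filter fun u => u ≠ v ∧ (u, v) ∉ G.arcs ∧ (v, u) ∉ G.arcs).card ≤ s

/-- A path decomposition of a digraph, as a list of bags. -/
def IsPathDecomp (G : Digr) (B : List (Finset ℕ)) : Prop :=
  (∀ X ∈ B, X ⊆ G.verts) ∧
  (∀ v ∈ G.verts, ∃ i, ∃ h : i < B.length, v ∈ B.get ⟨i, h⟩) ∧
  (∀ e ∈ G.arcs, ∃ i j, ∃ hi : i < B.length, ∃ hj : j < B.length,
      j ≤ i ∧ Prod.fst e ∈ B.get ⟨i, hi⟩ ∧ Prod.snd e ∈ B.get ⟨j, hj⟩) ∧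
  (∀ (v : ℕ) (i j k : ℕ) (_hij : i ≤ j) (hjk : j ≤ k)
      (hi : i < B.length) (hk : k < B.length),
      v ∈ B.get ⟨i, hi⟩ → v ∈ B.get ⟨k, hk⟩ → v ∈ B.get ⟨j, lt_of_le_of_lt hjk hk⟩)

/-- The pathwidth of a digraph. -/
noncomputable def pw (G : Digr) : ℕ :=
  sInf {w | ∃ B : List (Finset ℕ), G.IsPathDecomp B ∧ (B.map Finset.card).foldr max 0 - 1 = w}

/-- An ordering of the vertices of `G`. -/
def IsOrdering (G : Digr) (l : List ℕ) : Prop := (l : Multiset ℕ) = G.verts.val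

/-- The number of arcs (with multiplicity) going from the first `i` vertices of the
ordering `l` to the remaining ones. -/
def cutAt (G : Digr) (l : List ℕ) (i : ℕ) : ℕ :=
  (G.arcs.filter fun e => e.1 ∈ l.take i ∧ e.2 ∉ l.take i).card

/-- The cutwidth of a digraph. -/
noncomputable def ctw (G : Digr) : ℕ :=
  sInf {w | ∃ l : List ℕ, G.IsOrdering l ∧ ∀ i, G.cutAt l i ≤ w}

end Digr
/-!
A subdigraph-minimal `G` is itself a subdivision of a copy of `H`, so it suffices that
isomorphisms and single arc subdivisions preserve the number of strong components and the
property that components are strongly connected. In both cases there are vertex maps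
`f : G → H` and `g : H → G` sending arcs to directed paths, `f` onto `V(H)`, with `g ∘ f`
fixing every strong component of `G`; such a pair matches the strong components of `G` and
`H`. For a subdivision of `(u, v)` into `u, w, v`, the map collapsing `w` onto `v` has this
property because `(u, v)` lies on a directed cycle, its component being strongly connected.
-/

namespace Digr

variable {G H : Digr}

theorem Reach.ureach {a b : ℕ} (h : G.Reach a b) : G.UReach a b :=
  Relation.ReflTransGen.mono (fun _ _ => Or.inl) _ _ h

theorem UReach.symm {a b : ℕ} (h : G.UReach a b) : G.UReach b a := by
  induction h with
  | refl => exact .refl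
  | tail _ hbc ih => exact .head hbc.symm ih

theorem Reach.map {f : ℕ → ℕ} (hf : ∀ a b, G.Adj a b → H.Reach (f a) (f b)) {a b : ℕ}
    (h : G.Reach a b) : H.Reach (f a) (f b) :=
  Relation.ReflTransGen.lift' f hf _ _ h

theorem UReach.map {f : ℕ → ℕ} (hf : ∀ a b, G.Adj a b → H.Reach (f a) (f b)) {a b : ℕ}
    (h : G.UReach a b) : H.UReach (f a) (f b) :=
  Relation.ReflTransGen.lift' f
    (fun a b hab => hab.elim (fun h => (hf a b h).ureach) (fun h => (hf b a h).ureach.symm)) _ _ h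

theorem MutuallyReach.refl (a : ℕ) : G.MutuallyReach a a := ⟨.refl, .refl⟩

theorem MutuallyReach.symm {a b : ℕ} (h : G.MutuallyReach a b) : G.MutuallyReach b a :=
  ⟨h.2, h.1⟩

theorem MutuallyReach.trans {a b c : ℕ} (hab : G.MutuallyReach a b) (hbc : G.MutuallyReach b c) :
    G.MutuallyReach a c :=
  ⟨hab.1.trans hbc.1, hbc.2.trans hab.2⟩

theorem MutuallyReach.map {f : ℕ → ℕ} (hf : ∀ a b, G.Adj a b → H.Reach (f a) (f b))
    {a b : ℕ}
    (h : G.MutuallyReach a b) : H.MutuallyReach (f a) (f b) :=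
  ⟨h.1.map hf, h.2.map hf⟩

def scc (G : Digr) (v : ℕ) : Set ℕ := {u | u ∈ G.verts ∧ G.MutuallyReach u v}

theorem numSCC_eq_ncard_image_scc (G : Digr) : G.numSCC = (G.scc '' G.verts).ncard := by
  simp only [numSCC, scc, Set.image, Finset.mem_coe, eq_comm]

theorem scc_eq_of_mutuallyReach {a b : ℕ} (h : G.MutuallyReach a b) : G.scc a = G.scc b := by
  ext u
  exact and_congr_right fun _ => ⟨fun hu => hu.trans h, fun hu => hu.trans h.symm⟩

structure ReachEquiv (G H : Digr) (f g : ℕ → ℕ) : Prop where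
  mapsTo : Set.MapsTo f G.verts H.verts
  surjOn : Set.SurjOn f G.verts H.verts
  reach_map : ∀ a b, G.Adj a b → H.Reach (f a) (f b)
  reach_map_inv : ∀ a b, H.Adj a b → G.Reach (g a) (g b)
  mutuallyReach_inv_map : ∀ x ∈ G.verts, G.MutuallyReach x (g (f x))

namespace ReachEquiv

variable {f g : ℕ → ℕ}

theorem mutuallyReach_map_iff (hfg : ReachEquiv G H f g) {a b : ℕ} (ha : a ∈ G.verts)
    (hb : b ∈ G.verts) :
    H.MutuallyReach (f a) (f b) ↔ G.MutuallyReach a b :=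
  ⟨fun h => (hfg.mutuallyReach_inv_map a ha).trans
      ((h.map hfg.reach_map_inv).trans (hfg.mutuallyReach_inv_map b hb).symm),
    MutuallyReach.map hfg.reach_map⟩

theorem image_scc (hfg : ReachEquiv G H f g) {v : ℕ} (hv : v ∈ G.verts) :
    f '' G.scc v = H.scc (f v) := by
  ext y
  constructor
  · rintro ⟨x, ⟨hx, hxv⟩, rfl⟩
    exact ⟨hfg.mapsTo hx, (hfg.mutuallyReach_map_iff hx hv).2 hxv⟩
  · rintro ⟨hy, hyv⟩
    obtain ⟨x, hx, rfl⟩ := hfg.surjOn hy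
    exact ⟨x, ⟨hx, (hfg.mutuallyReach_map_iff hx hv).1 hyv⟩, rfl⟩

theorem numSCC_eq (hfg : ReachEquiv G H f g) : G.numSCC = H.numSCC := by
  have himage : Set.image f '' (G.scc '' G.verts) = H.scc '' H.verts := by
    rw [← hfg.surjOn.image_eq_of_mapsTo hfg.mapsTo, Set.image_image, Set.image_image]
    exact Set.image_congr fun v hv => hfg.image_scc hv
  have hinj : Set.InjOn (Set.image f) (G.scc '' G.verts) := by
    rintro _ ⟨v, hv, rfl⟩ _ ⟨v', hv', rfl⟩ hvv'
    rw [hfg.image_scc hv, hfg.image_scc hv'] at hvv'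
    have hmem : f v ∈ H.scc (f v') := hvv' ▸ ⟨hfg.mapsTo hv, .refl _⟩
    exact scc_eq_of_mutuallyReach ((hfg.mutuallyReach_map_iff hv hv').1 hmem.2)
  rw [numSCC_eq_ncard_image_scc, numSCC_eq_ncard_image_scc, ← himage, hinj.ncard_image]

theorem componentsStronglyConnected (hfg : ReachEquiv G H f g)
    (hH : H.ComponentsStronglyConnected) :
    G.ComponentsStronglyConnected := by
  intro x hx y hy hxy
  have hfxy : H.Reach (f x) (f y) :=
    hH _ (hfg.mapsTo hx) _ (hfg.mapsTo hy) (hxy.map hfg.reach_map)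
  exact (hfg.mutuallyReach_inv_map x hx).1.trans
    ((hfxy.map hfg.reach_map_inv).trans (hfg.mutuallyReach_inv_map y hy).2)

end ReachEquiv

theorem Iso.exists_reachEquiv (h : G.Iso H) : ∃ f g, ReachEquiv G H f g := by
  obtain ⟨φ, hφ, hcount⟩ := h
  have hinv := hφ.invOn_invFunOn
  have arc_of_count_eq {a b c d : ℕ}
      (heq : Multiset.count (a, b) G.arcs = Multiset.count (c, d) H.arcs) :
      (a, b) ∈ G.arcs ↔ (c, d) ∈ H.arcs := by
    rw [← Multiset.count_pos, heq, Multiset.count_pos]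
  refine ⟨φ, Function.invFunOn φ G.verts, hφ.mapsTo, hφ.surjOn, fun a b hab => ?_,
    fun a b hab => ?_, fun x hx => ?_⟩
  · refine .single ((arc_of_count_eq ?_).1 hab)
    exact hcount a b (G.mem_fst _ hab) (G.mem_snd _ hab)
  · have ha := H.mem_fst _ hab
    have hb := H.mem_snd _ hab
    refine .single ((arc_of_count_eq ?_).2 hab)
    rw [hcount _ _ (hφ.surjOn.mapsTo_invFunOn ha) (hφ.surjOn.mapsTo_invFunOn hb),
      hinv.2 ha, hinv.2 hb]
  · rw [hinv.1 hx]
    exact .refl x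

theorem SubdivStep.exists_reachEquiv {G' : Digr} (h : SubdivStep G G')
    (hG : G.ComponentsStronglyConnected) : ∃ f g, ReachEquiv G' G f g := by
  obtain ⟨u, v, w, huv, hw, hverts, harcs⟩ := h
  have hu : u ∈ G.verts := G.mem_fst _ huv
  have hv : v ∈ G.verts := G.mem_snd _ huv
  have hadj : ∀ a b, G'.Adj a b ↔
      (a, b) = (u, w) ∨ (a, b) = (w, v) ∨ (a, b) ∈ G.arcs.erase (u, v) := by
    intro a b
    rw [Adj, harcs, Multiset.mem_cons, Multiset.mem_cons]
  have huw : G'.Adj u w := (hadj u w).2 (Or.inl rfl)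
  have hwv : G'.Adj w v := (hadj w v).2 (Or.inr (Or.inl rfl))
  have hreach : ∀ a b, G.Adj a b → G'.Reach a b := by
    intro a b hab
    by_cases hab' : (a, b) = (u, v)
    · obtain ⟨rfl, rfl⟩ := Prod.mk.inj hab'
      exact .head huw (.single hwv)
    · exact .single ((hadj a b).2 (Or.inr (Or.inr ((Multiset.mem_erase_of_ne hab').2 hab))))
  have hvu : G.Reach v u := hG v hv u hu (.single (Or.inr huv))
  set f : ℕ → ℕ := fun x => if x = w then v else x
  have hfw : f w = v := if_pos rfl
  have hfx : ∀ x, x ≠ w → f x = x := fun x hxw => if_neg hxw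
  have hf : ∀ x ∈ G.verts, f x = x := fun x hx => hfx x fun hxw => hw (hxw ▸ hx)
  refine ⟨f, id, fun x hx => ?_, fun y hy => ?_, fun a b hab => ?_, hreach, fun x hx => ?_⟩
  · rw [hverts, Finset.coe_insert] at hx
    rcases hx with rfl | hx
    · rwa [hfw]
    · rwa [hf x hx]
  · exact ⟨y, by rw [hverts]; exact Finset.mem_insert_of_mem hy, hf y hy⟩
  · rcases (hadj a b).1 hab with hab' | hab' | hab'
    · obtain ⟨rfl, rfl⟩ := Prod.mk.inj hab'
      rw [hf a hu, hfw]
      exact .single huv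
    · obtain ⟨rfl, rfl⟩ := Prod.mk.inj hab'
      rw [hfw, hf b hv]
      exact .refl
    · have hab'' := Multiset.mem_of_mem_erase hab'
      rw [hf a (G.mem_fst _ hab''), hf b (G.mem_snd _ hab'')]
      exact .single hab''
  · by_cases hxw : x = w
    · subst hxw
      rw [hfw]
      exact ⟨.single hwv, (hvu.map (f := id) hreach).tail huw⟩
    · rw [id, hfx x hxw]
      exact .refl x

theorem componentsStronglyConnected_and_numSCC_eq_of_subdiv {G' : Digr}
    (h : Relation.ReflTransGen SubdivStep G G') (hG : G.ComponentsStronglyConnected) :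
    G'.ComponentsStronglyConnected ∧ G'.numSCC = G.numSCC := by
  induction h with
  | refl => exact ⟨hG, rfl⟩
  | tail _ hstep ih =>
    obtain ⟨f, g, hfg⟩ := hstep.exists_reachEquiv ih.1
    exact ⟨hfg.componentsStronglyConnected ih.1, hfg.numSCC_eq.trans ih.2⟩

end Digr

/-- a subdigraph-minimal digraph containing, as a topological minor, a
digraph `H` whose connected components are strongly connected has the same number of
strongly connected components as `H`. -/
theorem numSCC_minimal_top_minor (H G : Digr)
    (hH : H.ComponentsStronglyConnected)
    (hG : H.TopMinorOf G)
    (hmin : ∀ G' : Digr, G'.IsSubdigraph G → G' ≠ G → ¬ H.TopMinorOf G') :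
    H.numSCC = G.numSCC := by
  obtain ⟨H₀, H₁, hiso, hsubdiv, hsub⟩ := hG
  obtain rfl : H₁ = G := by
    by_contra hne
    exact hmin H₁ hsub hne ⟨H₀, H₁, hiso, hsubdiv, le_rfl, le_rfl⟩
  obtain ⟨f, g, hfg⟩ := hiso.exists_reachEquiv
  have hH₀ := hfg.componentsStronglyConnected hH
  rw [← hfg.numSCC_eq]
  exact (Digr.componentsStronglyConnected_and_numSCC_eq_of_subdiv hsubdiv hH₀).2.symm
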